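/- Transport formula for the model of Figure 4(d) (equation 25): Suppose (i) for every x, y, z, s with μ_x({Z = z} ∩ {S = s}) > 0, μ_x({Y = y} | {Z = z} ∩ {S = s}) = μ_x({Y = y} | {Z = z}) (S-admissibility of Z); (ii) there is a probability measure μ on 𝒵 × 𝒲 × 𝒮 (the source observational distribution augmented with the selection variable) such that μ_x({Z = z} | {W = w} ∩ {S = s}) = μ({Z = z} | {W = w} ∩ {S = s}) for all x, z, w, s (the consequence of the condition (X ⫫ Z | W, S) in the graph with arrows into X(W) deleted); and (iii) for every x, w, s, μ_x({W = w} | {S = s}) = μ_x({W = w}) (W is independent of S under μ_x, i.e., the empty set is S-admissible for the effect of X on W). Then for every x and y, μ_x({Y = y} | {S = s*}) = Σ_{z : 𝒵} μ_x({Y = y} | {Z = z}) · Σ_{w : 𝒲} μ_x({W = w}) · μ({Z = z} | {W = w} ∩ {S = s*}). -/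

import Mathlib

/-!
Write `P = μx x` and condition everything on `S = s*`. By (iii), (ii) and the chain rule,
`P(w) · μ(z | w, s*) = P(z, w | s*)`, so the inner sum over `w` is `P(z | s*)`. By (i) and the
chain rule again, `P(y | z) · P(z | s*) = P(y, z | s*)` (both sides vanish when `P(z, s*) = 0`),
and summing over `z` gives `P(y | s*)`.
-/

open MeasureTheory

/-- Conditional probability: `μ(A | B) = μ(A ∩ B) / μ(B)`. -/
noncomputable def pcond {Ω : Type*} [MeasurableSpace Ω] (μ : Measure Ω) (A B : Set Ω) :
    ENNReal := μ (A ∩ B) / μ B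

section

variable {Ω : Type*} [MeasurableSpace Ω] (ν : Measure Ω)

theorem measure_eq_sum_inter_fiber {β : Type*} [Fintype β] [MeasurableSpace β]
    [MeasurableSingletonClass β] {f : Ω → β} (hf : Measurable f) (A : Set Ω) :
    ν A = ∑ b, ν (A ∩ f ⁻¹' {b}) := by
  have hcover : ⋃ b, f ⁻¹' {b} = Set.univ := by ext; simp
  have hdisj : Pairwise (Function.onFun Disjoint fun b => f ⁻¹' {b}) :=
    fun b c hbc => (Set.disjoint_singleton.2 hbc).preimage f
  calc ν A = ν.restrict (⋃ b, f ⁻¹' {b}) A := by rw [hcover, Measure.restrict_univ]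
    _ = ∑ b, ν (A ∩ f ⁻¹' {b}) := by
      rw [Measure.restrict_iUnion hdisj fun b => hf (measurableSet_singleton b),
        Measure.sum_apply_of_countable, tsum_fintype]
      exact Finset.sum_congr rfl fun b _ =>
        Measure.restrict_apply' (hf (measurableSet_singleton b))

theorem pcond_eq_sum_inter_fiber {β : Type*} [Fintype β] [MeasurableSpace β]
    [MeasurableSingletonClass β] {f : Ω → β} (hf : Measurable f) (A C : Set Ω) :
    pcond ν A C = ∑ b, pcond ν (A ∩ f ⁻¹' {b}) C := by
  simp only [pcond, div_eq_mul_inv, ← Finset.sum_mul, Set.inter_right_comm _ _ C]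
  rw [← measure_eq_sum_inter_fiber ν hf]

theorem pcond_inter_mul_pcond [IsFiniteMeasure ν] (A B C : Set Ω) :
    pcond ν A (B ∩ C) * pcond ν B C = pcond ν (A ∩ B) C := by
  rw [pcond, pcond, pcond, ← mul_div_assoc, Set.inter_assoc,
    ENNReal.div_mul_cancel' (measure_mono_null Set.inter_subset_right)
      (fun h => absurd h (measure_ne_top ν _))]

variable {ν} in
theorem pcond_of_inter_null {A C : Set Ω} (h : ν (A ∩ C) = 0) : pcond ν A C = 0 := by
  rw [pcond, h, ENNReal.zero_div]

end

theorem fig4d_transport_formula_general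
    {𝒳 𝒴 𝒵 𝒲 𝒮 : Type*}
    [Fintype 𝒵] [Fintype 𝒲]
    [MeasurableSpace 𝒴]
    [MeasurableSpace 𝒵] [DiscreteMeasurableSpace 𝒵]
    [MeasurableSpace 𝒲] [DiscreteMeasurableSpace 𝒲]
    [MeasurableSpace 𝒮]
    -- post-intervention distributions of (Y, Z, W, S) in the source study
    (μx : 𝒳 → Measure (𝒴 × 𝒵 × 𝒲 × 𝒮))
    (hprobx : ∀ x, IsProbabilityMeasure (μx x))
    -- source observational distribution of (Z, W, S)
    (μ : Measure (𝒵 × 𝒲 × 𝒮))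
    (s' : 𝒮)
    -- (i) S-admissibility of Z : (Y ⫫ S | Z) under every μx x
    (hadm : ∀ x y z s, 0 < μx x ({p | p.2.1 = z} ∩ {p | p.2.2.2 = s}) →
      pcond (μx x) {p | p.1 = y} ({p | p.2.1 = z} ∩ {p | p.2.2.2 = s})
        = pcond (μx x) {p | p.1 = y} {p | p.2.1 = z})
    -- (ii) (X ⫫ Z | W, S) in the graph with arrows into X(W) deleted :
    -- P(z | do(x), w, s) = P(z | w, s)
    (hrule3 : ∀ x z w s,
      pcond (μx x) {p | p.2.1 = z} ({p | p.2.2.1 = w} ∩ {p | p.2.2.2 = s})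
        = pcond μ {q | q.1 = z} ({q | q.2.1 = w} ∩ {q | q.2.2 = s}))
    -- (iii) the empty set is S-admissible for the effect of X on W :
    -- P(w | do(x), s) = P(w | do(x))
    (hWadm : ∀ x w s,
      pcond (μx x) {p | p.2.2.1 = w} {p | p.2.2.2 = s} = μx x {p | p.2.2.1 = w}) :
    ∀ x y,
      pcond (μx x) {p | p.1 = y} {p | p.2.2.2 = s'}
        = ∑ z : 𝒵, pcond (μx x) {p | p.1 = y} {p | p.2.1 = z}
            * ∑ w : 𝒲, μx x {p | p.2.2.1 = w}
                * pcond μ {q | q.1 = z} ({q | q.2.1 = w} ∩ {q | q.2.2 = s'}) := by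
  intro x y
  have := hprobx x
  have hZ : Measurable fun p : 𝒴 × 𝒵 × 𝒲 × 𝒮 => p.2.1 := by fun_prop
  have hW : Measurable fun p : 𝒴 × 𝒵 × 𝒲 × 𝒮 => p.2.2.1 := by fun_prop
  have inner_sum : ∀ z, ∑ w : 𝒲, μx x {p | p.2.2.1 = w}
        * pcond μ {q | q.1 = z} ({q | q.2.1 = w} ∩ {q | q.2.2 = s'})
      = pcond (μx x) {p | p.2.1 = z} {p | p.2.2.2 = s'} := fun z =>
    calc _ = ∑ w : 𝒲, pcond (μx x) ({p | p.2.1 = z} ∩ {p | p.2.2.1 = w}) {p | p.2.2.2 = s'} :=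
          Finset.sum_congr rfl fun w _ => by
            rw [← hrule3 x z w s', ← hWadm x w s', mul_comm, pcond_inter_mul_pcond]
      _ = _ := (pcond_eq_sum_inter_fiber _ hW _ _).symm
  have summand : ∀ z, pcond (μx x) {p | p.1 = y} {p | p.2.1 = z}
        * pcond (μx x) {p | p.2.1 = z} {p | p.2.2.2 = s'}
      = pcond (μx x) ({p | p.1 = y} ∩ {p | p.2.1 = z}) {p | p.2.2.2 = s'} := by
    intro z
    rcases eq_zero_or_pos (μx x ({p | p.2.1 = z} ∩ {p | p.2.2.2 = s'})) with hnull | hpos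
    · rw [pcond_of_inter_null hnull, mul_zero,
        pcond_of_inter_null (measure_mono_null (Set.inter_subset_inter_left _
          Set.inter_subset_right) hnull)]
    · rw [← hadm x y z s' hpos, pcond_inter_mul_pcond]
  simp only [inner_sum, summand]
  exact pcond_eq_sum_inter_fiber _ hZ _ _

/-- Transport formula for the model of Figure 4(d), eq. (25):
`P*(y | do(x)) = ∑ z, P(y | do(x), z) · ∑ w, P(w | do(x)) · P*(z | w)`. -/
theorem fig4d_transport_formula
    {𝒳 𝒴 𝒵 𝒲 𝒮 : Type*}
    [Fintype 𝒳] [Fintype 𝒴] [Fintype 𝒵] [Fintype 𝒲] [Fintype 𝒮]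
    [Nonempty 𝒳] [Nonempty 𝒴] [Nonempty 𝒵] [Nonempty 𝒲] [Nonempty 𝒮]
    [MeasurableSpace 𝒴] [DiscreteMeasurableSpace 𝒴]
    [MeasurableSpace 𝒵] [DiscreteMeasurableSpace 𝒵]
    [MeasurableSpace 𝒲] [DiscreteMeasurableSpace 𝒲]
    [MeasurableSpace 𝒮] [DiscreteMeasurableSpace 𝒮]
    -- post-intervention distributions of (Y, Z, W, S) in the source study
    (μx : 𝒳 → Measure (𝒴 × 𝒵 × 𝒲 × 𝒮))
    (hprobx : ∀ x, IsProbabilityMeasure (μx x))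
    -- source observational distribution of (Z, W, S)
    (μ : Measure (𝒵 × 𝒲 × 𝒮)) (hprob : IsProbabilityMeasure μ)
    (s' : 𝒮)
    -- positive probability of all conditioning events appearing in the statement
    (hposS : ∀ x (s : 𝒮), 0 < μx x {p | p.2.2.2 = s})
    (hposZ : ∀ x (z : 𝒵), 0 < μx x {p | p.2.1 = z})
    (hposWSx : ∀ x w s, 0 < μx x ({p | p.2.2.1 = w} ∩ {p | p.2.2.2 = s}))
    (hposWS : ∀ w s, 0 < μ ({q | q.2.1 = w} ∩ {q | q.2.2 = s}))
    -- (i) S-admissibility of Z : (Y ⫫ S | Z) under every μx x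
    (hadm : ∀ x y z s, 0 < μx x ({p | p.2.1 = z} ∩ {p | p.2.2.2 = s}) →
      pcond (μx x) {p | p.1 = y} ({p | p.2.1 = z} ∩ {p | p.2.2.2 = s})
        = pcond (μx x) {p | p.1 = y} {p | p.2.1 = z})
    -- (ii) (X ⫫ Z | W, S) in the graph with arrows into X(W) deleted :
    -- P(z | do(x), w, s) = P(z | w, s)
    (hrule3 : ∀ x z w s,
      pcond (μx x) {p | p.2.1 = z} ({p | p.2.2.1 = w} ∩ {p | p.2.2.2 = s})
        = pcond μ {q | q.1 = z} ({q | q.2.1 = w} ∩ {q | q.2.2 = s}))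
    -- (iii) the empty set is S-admissible for the effect of X on W :
    -- P(w | do(x), s) = P(w | do(x))
    (hWadm : ∀ x w s,
      pcond (μx x) {p | p.2.2.1 = w} {p | p.2.2.2 = s} = μx x {p | p.2.2.1 = w}) :
    ∀ x y,
      pcond (μx x) {p | p.1 = y} {p | p.2.2.2 = s'}
        = ∑ z : 𝒵, pcond (μx x) {p | p.1 = y} {p | p.2.1 = z}
            * ∑ w : 𝒲, μx x {p | p.2.2.1 = w}
                * pcond μ {q | q.1 = z} ({q | q.2.1 = w} ∩ {q | q.2.2 = s'}) :=
  fig4d_transport_formula_general μx hprobx μ s' hadm hrule3 hWadm
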